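/- arXiv:1506.07818 — 3 statements merged into one kernel-verified Lean document; each statement's English description precedes it below -/
import Mathlib

section
/- Let A : ℕ^m → M_n(ℝ) satisfy A(t + T·1) = A(t) for all t ∈ ℕ^m, where T ≥ 1 is an integer. Define Ã(t) = A(t+(T-1)·1)·A(t+(T-2)·1)·…·A(t). Then the fundamental matrix Φ of the recurrence x(t+1) = A(t)x(t) satisfies Φ(t + k·T·1) = Φ(t)·(Ã(t - μ(t)·1))^k for every k ∈ ℕ. -/
/-!
Since `μ(t + T·1) = μ(t) + T`, the product defining `Φ(t + T·1)` splits into its first `μ(t)`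
factors, which by periodicity are those of `Φ(t)`, followed by `T` factors which form exactly
`Ã(t - μ(t)·1)`. Iterating gives the claim, as `t - μ(t)·1` is invariant under diagonal shifts.
-/

theorem Nat.iInf_add_const {ι : Sort*} [Nonempty ι] (f : ι → ℕ) (c : ℕ) :
    ⨅ i, (f i + c) = (⨅ i, f i) + c := by
  obtain ⟨j, hj⟩ := ciInf_mem f
  refine le_antisymm ?_ <| le_ciInf fun i =>
    Nat.add_le_add_right (ciInf_le (OrderBot.bddBelow _) i) c
  rw [← hj]
  exact ciInf_le (OrderBot.bddBelow _) j

section DiagonalRecurrence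

variable {ι M : Type*} [Monoid M]

/-- `Φ(t) = A(t - 1)⋯A(t - μ(t)·1)`, with `μ(t) = ⨅ i, t i`. -/
noncomputable def fundamentalProd (A : (ι → ℕ) → M) (t : ι → ℕ) : M :=
  ((List.range (⨅ i, t i)).map (fun k => A (fun i => t i - (k + 1)))).prod

/-- `Ã(t) = A(t + (T-1)·1)⋯A(t)`. -/
def periodProd (A : (ι → ℕ) → M) (T : ℕ) (t : ι → ℕ) : M :=
  ((List.range T).map (fun k => A (fun i => t i + (T - 1 - k)))).prod

variable [Nonempty ι] {A : (ι → ℕ) → M} {T : ℕ}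

theorem fundamentalProd_add_period (hA : ∀ t, A (fun i => t i + T) = A t) (t : ι → ℕ) :
    fundamentalProd A (fun i => t i + T) =
      fundamentalProd A t * periodProd A T (fun i => t i - ⨅ i, t i) := by
  set μ := ⨅ i, t i
  have hμ : ∀ i, μ ≤ t i := fun i => ciInf_le (OrderBot.bddBelow _) i
  rw [fundamentalProd, Nat.iInf_add_const, List.range_add, List.map_append, List.prod_append,
    List.map_map, fundamentalProd, periodProd]
  congr 2
  · refine List.map_congr_left fun a ha => ?_
    rw [List.mem_range] at ha
    rw [← hA fun i => t i - (a + 1)]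
    congr 1
    funext i
    have := hμ i
    omega
  · refine List.map_congr_left fun a ha => ?_
    rw [List.mem_range] at ha
    rw [Function.comp_apply]
    congr 1
    funext i
    have := hμ i
    omega

theorem fundamentalProd_add_mul_period (hA : ∀ t, A (fun i => t i + T) = A t) (t : ι → ℕ)
    (k : ℕ) :
    fundamentalProd A (fun i => t i + k * T) =
      fundamentalProd A t * periodProd A T (fun i => t i - ⨅ i, t i) ^ k := by
  induction k with
  | zero => simp
  | succ k ih =>
    have hshift : (fun i => t i + k * T - ⨅ j, (t j + k * T)) = fun i => t i - ⨅ j, t j := by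
      funext i
      rw [Nat.iInf_add_const]
      omega
    simp only [Nat.succ_mul, ← add_assoc]
    rw [fundamentalProd_add_period hA (fun i => t i + k * T), ih, hshift, pow_succ, mul_assoc]

end DiagonalRecurrence

theorem stmt_1_general {m n T : ℕ} (hm : 2 ≤ m)
    (A : (Fin m → ℕ) → Matrix (Fin n) (Fin n) ℝ)
    (hA : ∀ t : Fin m → ℕ, A (fun i => t i + T) = A t)
    (Φ : (Fin m → ℕ) → Matrix (Fin n) (Fin n) ℝ)
    (hΦ : ∀ t : Fin m → ℕ,
      Φ t = ((List.range (⨅ i, t i)).map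
        (fun k => A (fun i => t i - (k + 1)))).prod)
    (Atil : (Fin m → ℕ) → Matrix (Fin n) (Fin n) ℝ)
    (hAtil : ∀ t : Fin m → ℕ,
      Atil t = ((List.range T).map (fun k => A (fun i => t i + (T - 1 - k)))).prod) :
    ∀ (t : Fin m → ℕ) (k : ℕ),
      Φ (fun i => t i + k * T) =
        Φ t * (Atil (fun i => t i - ⨅ i, t i)) ^ k := by
  obtain rfl : Φ = fundamentalProd A := funext hΦ
  obtain rfl : Atil = periodProd A T := funext hAtil
  have : Nonempty (Fin m) := ⟨⟨0, by omega⟩⟩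
  exact fundamentalProd_add_mul_period hA

/-- For a `T`-diagonal-periodic recurrence, the fundamental matrix satisfies
`Φ(t + kT·1) = Φ(t)·(Ã(t-μ(t)·1))^k`, where `Ã(t) = A(t+(T-1)·1)⋯A(t)`. -/
theorem stmt_1 {m n T : ℕ} (hm : 2 ≤ m) (hT : 1 ≤ T)
    (A : (Fin m → ℕ) → Matrix (Fin n) (Fin n) ℝ)
    (hA : ∀ t : Fin m → ℕ, A (fun i => t i + T) = A t)
    (Φ : (Fin m → ℕ) → Matrix (Fin n) (Fin n) ℝ)
    (hΦ : ∀ t : Fin m → ℕ,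
      Φ t = ((List.range (⨅ i, t i)).map
        (fun k => A (fun i => t i - (k + 1)))).prod)
    (Atil : (Fin m → ℕ) → Matrix (Fin n) (Fin n) ℝ)
    (hAtil : ∀ t : Fin m → ℕ,
      Atil t = ((List.range T).map (fun k => A (fun i => t i + (T - 1 - k)))).prod) :
    ∀ (t : Fin m → ℕ) (k : ℕ),
      Φ (fun i => t i + k * T) =
        Φ t * (Atil (fun i => t i - ⨅ i, t i)) ^ k :=
  stmt_1_general hm A hA Φ hΦ Atil hAtil
end

section
/- Let A : ℕ^m → M_n(ℝ) with A(t + T·1) = A(t) for all t, T ≥ 1, and A(t) invertible for all t. Let B : ℕ^m → M_n(ℂ) satisfy B(t+1) = B(t) and B(t)^T = D(t) (the monodromy matrix) for all t, with B(t) invertible. Then the function P(t) := Φ(t)·B(t)^{-μ(t)} satisfies P(t + T·1) = P(t) for all t ∈ ℕ^m, i.e., the fundamental matrix decomposes as Φ(t) = P(t)·B(t)^{μ(t)} with P being T-diagonal-periodic. -/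
/-- Floquet decomposition: with `B(t)` a `T`-th root of the monodromy matrix constant
along diagonals, `P(t) := Φ(t)·B(t)^{-μ(t)}` is `T`-diagonal-periodic and
`Φ(t) = P(t)·B(t)^{μ(t)}`. -/
theorem stmt_3 {m n T : ℕ} (hm : 2 ≤ m) (hT : 1 ≤ T)
    (A : (Fin m → ℕ) → Matrix (Fin n) (Fin n) ℝ)
    (hA : ∀ t : Fin m → ℕ, A (fun i => t i + T) = A t)
    (hAinv : ∀ t : Fin m → ℕ, IsUnit (A t))
    (Φ : (Fin m → ℕ) → Matrix (Fin n) (Fin n) ℝ)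
    (hΦ : ∀ t : Fin m → ℕ,
      Φ t = ((List.range (⨅ i, t i)).map
        (fun k => A (fun i => t i - (k + 1)))).prod)
    (D : (Fin m → ℕ) → Matrix (Fin n) (Fin n) ℝ)
    (hD : ∀ t : Fin m → ℕ,
      D t = ((List.range T).map
        (fun k => A (fun i => (t i - ⨅ i, t i) + (T - 1 - k)))).prod)
    (B : (Fin m → ℕ) → Matrix (Fin n) (Fin n) ℂ)
    (hBper : ∀ t : Fin m → ℕ, B (fun i => t i + 1) = B t)
    (hBroot : ∀ t : Fin m → ℕ, (B t) ^ T = (D t).map (Complex.ofReal))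
    (hBinv : ∀ t : Fin m → ℕ, IsUnit (B t))
    (P : (Fin m → ℕ) → Matrix (Fin n) (Fin n) ℂ)
    (hP : ∀ t : Fin m → ℕ,
      P t = (Φ t).map (Complex.ofReal) * ((B t)⁻¹) ^ (⨅ i, t i)) :
    (∀ t : Fin m → ℕ, P (fun i => t i + T) = P t) ∧
    (∀ t : Fin m → ℕ,
      (Φ t).map (Complex.ofReal) = P t * (B t) ^ (⨅ i, t i)) := by
  have hm0 : 0 < m := by omega
  haveI : Nonempty (Fin m) := ⟨⟨0, hm0⟩⟩
  -- infimum facts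
  have hinf_le : ∀ (t : Fin m → ℕ) (i : Fin m), (⨅ i, t i) ≤ t i :=
    fun t i => ciInf_le (OrderBot.bddBelow _) i
  have hinf_add : ∀ (t : Fin m → ℕ) (c : ℕ), (⨅ i, (t i + c)) = (⨅ i, t i) + c := by
    intro t c
    obtain ⟨j, hj⟩ := Finite.exists_min t
    have h1 : (⨅ i, t i) = t j := le_antisymm (hinf_le t j) (le_ciInf hj)
    have h2 : (⨅ i, (t i + c)) = t j + c :=
      le_antisymm (hinf_le _ j) (le_ciInf fun i => Nat.add_le_add_right (hj i) c)
    rw [h1, h2]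
  -- B is constant along diagonals
  have hBshift : ∀ (k : ℕ) (t : Fin m → ℕ), B (fun i => t i + k) = B t := by
    intro k
    induction k with
    | zero => intro t; simp
    | succ k ih =>
      intro t
      have he : (fun i => t i + (k + 1)) = (fun i => (t i + k) + 1) := by
        funext i; omega
      rw [he, hBper (fun i => t i + k), ih t]
  -- the key identity Φ(t + T·1) = Φ(t) * D(t)
  have hkey : ∀ t : Fin m → ℕ, Φ (fun i => t i + T) = Φ t * D t := by
    intro t
    have hμ : (⨅ i, (t i + T)) = (⨅ i, t i) + T := hinf_add t T
    rw [hΦ (fun i => t i + T), hΦ t, hD t]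
    simp only [hμ, List.range_add, List.map_append, List.prod_append, List.map_map]
    congr 1
    · refine congrArg List.prod (List.map_congr_left ?_)
      intro k hk
      rw [List.mem_range] at hk
      have he : (fun i => t i + T - (k + 1)) = (fun i => (t i - (k + 1)) + T) := by
        funext i
        have := hinf_le t i
        omega
      rw [he, hA (fun i => t i - (k + 1))]
    · refine congrArg List.prod (List.map_congr_left ?_)
      intro k hk
      rw [List.mem_range] at hk
      simp only [Function.comp]
      refine congrArg A (funext fun i => ?_)
      have := hinf_le t i
      omega
  -- cancellation lemmas
  have hBB : ∀ t : Fin m → ℕ, B t * (B t)⁻¹ = 1 := fun t =>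
    Matrix.mul_nonsing_inv _ ((Matrix.isUnit_iff_isUnit_det _).mp (hBinv t))
  have hBB' : ∀ t : Fin m → ℕ, (B t)⁻¹ * B t = 1 := fun t =>
    Matrix.nonsing_inv_mul _ ((Matrix.isUnit_iff_isUnit_det _).mp (hBinv t))
  have hcancel : ∀ (t : Fin m → ℕ) (k : ℕ), B t ^ k * (B t)⁻¹ ^ k = 1 := by
    intro t k
    induction k with
    | zero => simp
    | succ k ih =>
      rw [pow_succ, pow_succ' ((B t)⁻¹), mul_assoc, ← mul_assoc (B t), hBB t,
        one_mul, ih]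
  have hcancel' : ∀ (t : Fin m → ℕ) (k : ℕ), (B t)⁻¹ ^ k * B t ^ k = 1 := by
    intro t k
    induction k with
    | zero => simp
    | succ k ih =>
      rw [pow_succ, pow_succ' (B t), mul_assoc, ← mul_assoc (B t)⁻¹, hBB' t,
        one_mul, ih]
  have hmapmul : ∀ X Y : Matrix (Fin n) (Fin n) ℝ,
      (X * Y).map Complex.ofReal = X.map Complex.ofReal * Y.map Complex.ofReal :=
    fun X Y => Matrix.map_mul (f := Complex.ofRealHom)
  constructor
  · intro t
    rw [hP, hP, hBshift T t, hkey t, hinf_add t T, hmapmul, ← hBroot t,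
      add_comm (⨅ i, t i) T, pow_add, ← mul_assoc, mul_assoc ((Φ t).map Complex.ofReal),
      hcancel t T, mul_one]
  · intro t
    rw [hP, mul_assoc, hcancel' t, mul_one]
end

section
/- Under the hypotheses of the Floquet decomposition (A T-diagonal-periodic with invertible values, Φ(t) = P(t)B(t)^{μ(t)}, B(t+1)=B(t), P(t) invertible), if y : ℕ^m → ℂ^n satisfies y(t+1) = B(t)y(t) for all t ∈ ℕ^m, then x(t) := P(t)y(t) satisfies x(t+1) = A(t)x(t) for all t ∈ ℕ^m. Conversely, if x satisfies x(t+1)=A(t)x(t), then y(t) := P(t)^{-1}x(t) satisfies y(t+1) = B(t)y(t). -/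
/-!
Since `min (t + 1) = min t + 1`, the product formula for `Φ` gives `Φ (t + 1) = A t * Φ t`,
and together with `B (t + 1) = B t` this yields `P (t + 1) = A t * P t * (B t)⁻¹`. With `A` and
`B` invertible, this identity carries solutions of the `B`-system to solutions of the `A`-system
under `y ↦ P y`, and back under `x ↦ P⁻¹ x`.
-/

open Matrix

theorem Nat.iInf_add_one {ι : Type*} [Finite ι] [Nonempty ι] (t : ι → ℕ) :
    ⨅ i, (t i + 1) = (⨅ i, t i) + 1 :=
  (Monotone.map_ciInf_of_continuousAt (continuous_add_const 1).continuousAt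
    (fun _ _ h => Nat.add_le_add_right h 1) (OrderBot.bddBelow _)).symm

theorem List.prod_range_map_succ_sub {ι M : Type*} [Monoid M] (A : (ι → ℕ) → M)
    (t : ι → ℕ) (N : ℕ) :
    ((List.range (N + 1)).map fun k => A fun i => t i + 1 - (k + 1)).prod =
      A t * ((List.range N).map fun k => A fun i => t i - (k + 1)).prod := by
  simp only [List.prod_range_succ', Nat.add_sub_add_right, Nat.sub_zero, Nat.succ_eq_add_one]

section
variable {ι K : Type*} [Fintype ι] [DecidableEq ι] [CommRing K]

theorem Matrix.mulVec_of_eq_mul_mul_inv {P P' A B : Matrix ι ι K} (h : P' = A * P * B⁻¹)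
    (hB : IsUnit B) {y y' : ι → K} (hy : y' = B *ᵥ y) : P' *ᵥ y' = A *ᵥ (P *ᵥ y) := by
  rw [hy, h, mulVec_mulVec, mulVec_mulVec,
    nonsing_inv_mul_cancel_right _ _ ((isUnit_iff_isUnit_det B).mp hB)]

theorem Matrix.inv_mulVec_of_eq_mul_mul_inv {P P' A B : Matrix ι ι K} (h : P' = A * P * B⁻¹)
    (hA : IsUnit A) (hB : IsUnit B) {x x' : ι → K} (hx : x' = A *ᵥ x) :
    P'⁻¹ *ᵥ x' = B *ᵥ (P⁻¹ *ᵥ x) := by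
  rw [hx, h, mulVec_mulVec, mulVec_mulVec, Matrix.mul_inv_rev, Matrix.mul_inv_rev,
    nonsing_inv_nonsing_inv _ ((isUnit_iff_isUnit_det B).mp hB), ← Matrix.mul_assoc B,
    nonsing_inv_mul_cancel_right _ _ ((isUnit_iff_isUnit_det A).mp hA)]

end

theorem floquetFactor_succ {ι n R K : Type*} [Finite ι] [Nonempty ι] [Fintype n] [DecidableEq n]
    [CommRing R] [CommRing K] (f : R →+* K) (A Φ : (ι → ℕ) → Matrix n n R)
    (hΦ : ∀ t, Φ t = ((List.range (⨅ i, t i)).map fun k => A fun i => t i - (k + 1)).prod)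
    (B : (ι → ℕ) → Matrix n n K) (hBper : ∀ t, B (fun i => t i + 1) = B t)
    (P : (ι → ℕ) → Matrix n n K)
    (hP : ∀ t, P t = (Φ t).map f * (B t)⁻¹ ^ (⨅ i, t i)) (t : ι → ℕ) :
    P (fun i => t i + 1) = (A t).map f * P t * (B t)⁻¹ := by
  rw [hP, hP, hΦ, hΦ, hBper, Nat.iInf_add_one, List.prod_range_map_succ_sub, pow_succ,
    Matrix.map_mul, Matrix.mul_assoc, Matrix.mul_assoc, Matrix.mul_assoc]

theorem stmt_4_general {m n : ℕ} (hm : 2 ≤ m)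
    (A : (Fin m → ℕ) → Matrix (Fin n) (Fin n) ℝ)
    (hAinv : ∀ t : Fin m → ℕ, IsUnit (A t))
    (Φ : (Fin m → ℕ) → Matrix (Fin n) (Fin n) ℝ)
    (hΦ : ∀ t : Fin m → ℕ,
      Φ t = ((List.range (⨅ i, t i)).map
        (fun k => A (fun i => t i - (k + 1)))).prod)
    (B : (Fin m → ℕ) → Matrix (Fin n) (Fin n) ℂ)
    (hBper : ∀ t : Fin m → ℕ, B (fun i => t i + 1) = B t)
    (hBinv : ∀ t : Fin m → ℕ, IsUnit (B t))
    (P : (Fin m → ℕ) → Matrix (Fin n) (Fin n) ℂ)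
    (hP : ∀ t : Fin m → ℕ,
      P t = (Φ t).map (Complex.ofReal) * ((B t)⁻¹) ^ (⨅ i, t i)) :
    (∀ y : (Fin m → ℕ) → (Fin n → ℂ),
      (∀ t : Fin m → ℕ, y (fun i => t i + 1) = (B t).mulVec (y t)) →
      (∀ t : Fin m → ℕ,
        (P (fun i => t i + 1)).mulVec (y (fun i => t i + 1)) =
          ((A t).map (Complex.ofReal)).mulVec ((P t).mulVec (y t)))) ∧
    (∀ x : (Fin m → ℕ) → (Fin n → ℂ),
      (∀ t : Fin m → ℕ,
        x (fun i => t i + 1) = ((A t).map (Complex.ofReal)).mulVec (x t)) →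
      (∀ t : Fin m → ℕ,
        (P (fun i => t i + 1))⁻¹.mulVec (x (fun i => t i + 1)) =
          (B t).mulVec ((P t)⁻¹.mulVec (x t)))) := by
  have : Nonempty (Fin m) := ⟨⟨0, by omega⟩⟩
  have hstep (t : Fin m → ℕ) :
      P (fun i => t i + 1) = (A t).map Complex.ofReal * P t * (B t)⁻¹ :=
    floquetFactor_succ Complex.ofRealHom A Φ hΦ B hBper P hP t
  have hAinvℂ (t : Fin m → ℕ) : IsUnit ((A t).map Complex.ofReal) :=
    (hAinv t).map Complex.ofRealHom.mapMatrix
  exact ⟨fun y hy t => mulVec_of_eq_mul_mul_inv (hstep t) (hBinv t) (hy t),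
    fun x hx t => inv_mulVec_of_eq_mul_mul_inv (hstep t) (hAinvℂ t) (hBinv t) (hx t)⟩

/-- Floquet reduction: via `x(t) = P(t)y(t)`, solutions of `y(t+1) = B(t)y(t)` correspond
to solutions of `x(t+1) = A(t)x(t)`, and conversely via `y(t) = P(t)⁻¹x(t)`. -/
theorem stmt_4 {m n T : ℕ} (hm : 2 ≤ m) (hT : 1 ≤ T)
    (A : (Fin m → ℕ) → Matrix (Fin n) (Fin n) ℝ)
    (hA : ∀ t : Fin m → ℕ, A (fun i => t i + T) = A t)
    (hAinv : ∀ t : Fin m → ℕ, IsUnit (A t))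
    (Φ : (Fin m → ℕ) → Matrix (Fin n) (Fin n) ℝ)
    (hΦ : ∀ t : Fin m → ℕ,
      Φ t = ((List.range (⨅ i, t i)).map
        (fun k => A (fun i => t i - (k + 1)))).prod)
    (B : (Fin m → ℕ) → Matrix (Fin n) (Fin n) ℂ)
    (hBper : ∀ t : Fin m → ℕ, B (fun i => t i + 1) = B t)
    (hBroot : ∀ t : Fin m → ℕ,
      (B t) ^ T = ((List.range T).map
        (fun k => A (fun i => (t i - ⨅ i, t i) + (T - 1 - k)))).prod.map
          (Complex.ofReal))
    (hBinv : ∀ t : Fin m → ℕ, IsUnit (B t))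
    (P : (Fin m → ℕ) → Matrix (Fin n) (Fin n) ℂ)
    (hP : ∀ t : Fin m → ℕ,
      P t = (Φ t).map (Complex.ofReal) * ((B t)⁻¹) ^ (⨅ i, t i))
    (hPinv : ∀ t : Fin m → ℕ, IsUnit (P t)) :
    (∀ y : (Fin m → ℕ) → (Fin n → ℂ),
      (∀ t : Fin m → ℕ, y (fun i => t i + 1) = (B t).mulVec (y t)) →
      (∀ t : Fin m → ℕ,
        (P (fun i => t i + 1)).mulVec (y (fun i => t i + 1)) =
          ((A t).map (Complex.ofReal)).mulVec ((P t).mulVec (y t)))) ∧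
    (∀ x : (Fin m → ℕ) → (Fin n → ℂ),
      (∀ t : Fin m → ℕ,
        x (fun i => t i + 1) = ((A t).map (Complex.ofReal)).mulVec (x t)) →
      (∀ t : Fin m → ℕ,
        (P (fun i => t i + 1))⁻¹.mulVec (x (fun i => t i + 1)) =
          (B t).mulVec ((P t)⁻¹.mulVec (x t)))) :=
  stmt_4_general hm A hAinv Φ hΦ B hBper hBinv P hP
end
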